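/- arXiv:2602.00467 — 6 statements merged into one kernel-verified Lean document; each statement's English description precedes it below -/
import Mathlib

section
/- For all integers n ≥ k ≥ 0, the degenerate Stirling numbers of the first kind satisfy S_{1,λ}(n,k) = C(n-1,k-1) β_{n-k,λ}^{(n)}, where β_{m,λ}^{(α)} are the degenerate Bernoulli numbers of order α. -/
open PowerSeries Finset Nat

/-- The formal binomial series `(1+t)^a` for a real exponent `a`. -/
noncomputable def realBinomialSeries (a : ℝ) : PowerSeries ℝ :=
  PowerSeries.mk fun n => (∏ i ∈ Finset.range n, (a - i)) / (n ! : ℝ)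

/-- The degenerate logarithm `log_λ(1+t) = (1/λ)((1+t)^λ - 1)`. -/
noncomputable def degLog (l : ℝ) : PowerSeries ℝ :=
  l⁻¹ • (realBinomialSeries l - 1)

/-- The degenerate exponential `e_λ(t) = (1+λt)^{1/λ}`. -/
noncomputable def degExp (l : ℝ) : PowerSeries ℝ :=
  PowerSeries.mk fun n => (∏ i ∈ Finset.range n, (l⁻¹ - i)) / (n ! : ℝ) * l ^ n

lemma coeff_degLog (l : ℝ) (n : ℕ) :
    coeff n (degLog l) = l⁻¹ * ((∏ i ∈ Finset.range n, (l - i)) / (n ! : ℝ)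
      - if n = 0 then 1 else 0) := by
  simp [degLog, realBinomialSeries, coeff_mk, PowerSeries.coeff_one]

lemma coeff_degLog_zero (l : ℝ) : coeff 0 (degLog l) = 0 := by
  simp [coeff_degLog]

lemma coeff_degLog_one (l : ℝ) (hl : l ≠ 0) : coeff 1 (degLog l) = 1 := by
  simp [coeff_degLog, hl]

lemma coeff_one_add_X_mul (f : PowerSeries ℝ) (n : ℕ) :
    coeff (n+1) ((1 + X) * f) = coeff (n+1) f + coeff n f := by
  rw [add_mul, one_mul, map_add, coeff_succ_X_mul]

lemma degLog_ODE (l : ℝ) (hl : l ≠ 0) :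
    (1 + X) * d⁄dX ℝ (degLog l) = C l * degLog l + 1 := by
  ext n
  rcases n with _ | n
  · rw [show ((1:PowerSeries ℝ) + X) * d⁄dX ℝ (degLog l)
        = d⁄dX ℝ (degLog l) + X * d⁄dX ℝ (degLog l) by ring]
    rw [map_add, map_add, coeff_zero_eq_constantCoeff, map_mul]
    simp only [constantCoeff_X, zero_mul, add_zero]
    rw [← coeff_zero_eq_constantCoeff, coeff_derivative, coeff_degLog_one l hl,
      coeff_C_mul, coeff_degLog_zero]
    norm_num
  · rw [coeff_one_add_X_mul, coeff_derivative, coeff_derivative, map_add,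
      PowerSeries.coeff_one, coeff_C_mul, coeff_degLog, coeff_degLog]
    have h2 : ((n+1)! : ℝ) ≠ 0 := Nat.cast_ne_zero.mpr (Nat.factorial_ne_zero _)
    have h1 : ((n+1+1)! : ℝ) = (n+1+1) * (n+1)! := by
      rw [Nat.factorial_succ]; push_cast; ring
    have h3 : ∏ i ∈ Finset.range (n+1+1), (l - i)
        = (∏ i ∈ Finset.range (n+1), (l - i)) * (l - (n+1)) := by
      rw [Finset.prod_range_succ]; push_cast; ring
    simp only [Nat.succ_ne_zero, if_false, sub_zero, add_eq_zero, one_ne_zero, and_false]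
    rw [h3, h1]
    push_cast
    field_simp
    ring

lemma coeff_degExp (l : ℝ) (n : ℕ) :
    coeff n (degExp l) = (∏ i ∈ Finset.range n, (l⁻¹ - i)) / (n ! : ℝ) * l ^ n := by
  simp [degExp, coeff_mk]

lemma coeff_degExp_zero (l : ℝ) : coeff 0 (degExp l) = 1 := by
  simp [coeff_degExp]

lemma coeff_degExp_one (l : ℝ) (hl : l ≠ 0) : coeff 1 (degExp l) = 1 := by
  simp [coeff_degExp, inv_mul_cancel₀ hl]

lemma degExp_ODE (l : ℝ) (hl : l ≠ 0) :
    (1 + C l * X) * d⁄dX ℝ (degExp l) = degExp l := by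
  ext n
  have key : ∀ m : ℕ, coeff m ((1 + C l * X) * d⁄dX ℝ (degExp l))
      = coeff m (d⁄dX ℝ (degExp l)) + l * coeff m (X * d⁄dX ℝ (degExp l)) := by
    intro m
    rw [show ((1:PowerSeries ℝ) + C l * X) * d⁄dX ℝ (degExp l)
        = d⁄dX ℝ (degExp l) + C l * (X * d⁄dX ℝ (degExp l)) by ring]
    rw [map_add, coeff_C_mul]
  rw [key]
  rcases n with _ | n
  · rw [coeff_zero_eq_constantCoeff, map_mul]
    simp only [constantCoeff_X, zero_mul, mul_zero, add_zero]
    rw [← coeff_zero_eq_constantCoeff, coeff_derivative, coeff_degExp_one l hl,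
      coeff_degExp_zero]
    norm_num
  · rw [coeff_succ_X_mul, coeff_derivative, coeff_derivative,
      coeff_degExp, coeff_degExp]
    have h2 : ((n+1)! : ℝ) ≠ 0 := Nat.cast_ne_zero.mpr (Nat.factorial_ne_zero _)
    have h1 : ((n+1+1)! : ℝ) = (n+1+1) * (n+1)! := by
      rw [Nat.factorial_succ]; push_cast; ring
    have h3 : ∏ i ∈ Finset.range (n+1+1), (l⁻¹ - i)
        = (∏ i ∈ Finset.range (n+1), (l⁻¹ - i)) * (l⁻¹ - (n+1)) := by
      rw [Finset.prod_range_succ]; push_cast; ring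
    rw [h3, h1]
    push_cast
    field_simp
    ring

section Pside
variable (l : ℝ) (Q : PowerSeries ℝ)

lemma constCoeff_Q (hl : l ≠ 0) (hQ : X * Q = degExp l - 1) :
    constantCoeff Q = 1 := by
  have := congrArg (coeff 1) hQ
  rw [coeff_succ_X_mul, map_sub, coeff_degExp_one l hl, coeff_zero_eq_constantCoeff] at this
  simpa using this

lemma QP_one (hl : l ≠ 0) (hQ : X * Q = degExp l - 1) : Q * Q⁻¹ = 1 :=
  PowerSeries.mul_inv_cancel Q (by rw [constCoeff_Q l Q hl hQ]; norm_num)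

lemma P_ODE (hl : l ≠ 0) (hQ : X * Q = degExp l - 1) :
    X * (1 + C l * X) * d⁄dX ℝ (Q⁻¹)
      = Q⁻¹ - (Q⁻¹)^2 + (C l - 1) * (X * Q⁻¹) := by
  have h1 : (1 + C l * X) * (X * d⁄dX ℝ Q + Q) = X * Q + 1 := by
    have hD : d⁄dX ℝ (degExp l) = X * d⁄dX ℝ Q + Q := by
      have : degExp l = X * Q + 1 := by rw [hQ]; ring
      rw [this, map_add, Derivation.leibniz, Derivation.map_one_eq_zero]
      simp only [smul_eq_mul, PowerSeries.derivative_X, mul_one, add_zero]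
    have h2 := degExp_ODE l hl
    rw [hD] at h2
    linear_combination h2 - hQ
  have hQP := QP_one l Q hl hQ
  rw [PowerSeries.derivative_inv']
  linear_combination (-(Q⁻¹)^2) * h1 + (Q⁻¹ * (1 + (C l - 1) * X)) * hQP
end Pside

lemma coeff_X_mul_deriv (F : PowerSeries ℝ) (m : ℕ) :
    coeff m (X * d⁄dX ℝ F) = m * coeff m F := by
  rcases m with _ | m
  · rw [coeff_zero_eq_constantCoeff, map_mul]
    simp
  · rw [coeff_succ_X_mul, coeff_derivative]
    push_cast; ring

lemma fpow_rec (l : ℝ) (hl : l ≠ 0) (j n : ℕ) :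
    ((n:ℝ)+1) * coeff (n+1) ((degLog l)^(j+1))
      = (l*((j:ℝ)+1) - n) * coeff n ((degLog l)^(j+1))
        + ((j:ℝ)+1) * coeff n ((degLog l)^j) := by
  set f := degLog l
  have hode : (1 + X) * d⁄dX ℝ (f^(j+1))
      = (j+1) • (C l * f^(j+1) + f^j) := by
    rw [Derivation.leibniz_pow]
    have h := degLog_ODE l hl
    simp only [Nat.add_sub_cancel, smul_eq_mul]
    rw [show ((1:PowerSeries ℝ) + X) * ((j+1) • (f ^ j * d⁄dX ℝ f))
        = (j+1) • (f^j * ((1 + X) * d⁄dX ℝ f)) by rw [mul_smul_comm]; congr 1; ring]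
    rw [h]
    congr 1
    ring
  have := congrArg (coeff n) hode
  rw [show ((1:PowerSeries ℝ) + X) * d⁄dX ℝ (f^(j+1))
      = d⁄dX ℝ (f^(j+1)) + X * d⁄dX ℝ (f^(j+1)) by ring] at this
  rw [map_add, coeff_X_mul_deriv, coeff_derivative, map_nsmul, map_add, coeff_C_mul] at this
  rw [nsmul_eq_mul] at this
  push_cast at this ⊢
  linarith [this]

lemma Ppow_rec (l : ℝ) (Q : PowerSeries ℝ) (hl : l ≠ 0) (hQ : X * Q = degExp l - 1)
    (j m : ℕ) :
    ((j:ℝ)+1) * coeff (m+1) ((Q⁻¹)^(j+2))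
      = (((j:ℝ)+1) - ((m:ℝ)+1)) * coeff (m+1) ((Q⁻¹)^(j+1))
        + ((l-1)*((j:ℝ)+1) - l*m) * coeff m ((Q⁻¹)^(j+1)) := by
  set P := Q⁻¹ with hP
  have hode : X * (1 + C l * X) * d⁄dX ℝ (P^(j+1))
      = (j+1) • (P^(j+1) - P^(j+2) + (C l - 1) * (X * P^(j+1))) := by
    rw [Derivation.leibniz_pow]
    simp only [Nat.add_sub_cancel, smul_eq_mul]
    rw [show X * (1 + C l * X) * ((j+1) • (P ^ j * d⁄dX ℝ P))
        = (j+1) • (P^j * (X * (1 + C l * X) * d⁄dX ℝ P)) by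
      rw [mul_smul_comm]; congr 1; ring]
    rw [P_ODE l Q hl hQ]
    congr 1
    ring
  have hkey := congrArg (coeff (m+1)) hode
  rw [show X * ((1:PowerSeries ℝ) + C l * X) * d⁄dX ℝ (P^(j+1))
      = X * d⁄dX ℝ (P^(j+1)) + C l * (X * (X * d⁄dX ℝ (P^(j+1)))) by ring] at hkey
  rw [map_add, coeff_X_mul_deriv, coeff_C_mul, coeff_succ_X_mul, coeff_X_mul_deriv,
    map_nsmul, map_add, map_sub, nsmul_eq_mul] at hkey
  rw [show (C l - 1) * (X * P^(j+1)) = C (l-1) * (X * P^(j+1)) by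
    rw [map_sub, map_one]] at hkey
  rw [coeff_C_mul, coeff_succ_X_mul] at hkey
  push_cast at hkey ⊢
  linarith [hkey]

lemma coeff_diag (l : ℝ) (hl : l ≠ 0) (n : ℕ) :
    coeff n ((degLog l)^n) = 1 := by
  obtain ⟨u, hu⟩ : (X : PowerSeries ℝ) ∣ degLog l := by
    rw [PowerSeries.X_dvd_iff, ← coeff_zero_eq_constantCoeff, coeff_degLog_zero]
  have hcc : constantCoeff u = 1 := by
    have := coeff_degLog_one l hl
    rw [hu, coeff_succ_X_mul, coeff_zero_eq_constantCoeff] at this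
    exact this
  rw [hu, mul_pow]
  have h := coeff_X_pow_mul (u^n) n 0
  rw [zero_add] at h
  rw [h, coeff_zero_eq_constantCoeff, map_pow, hcc, one_pow]

/-- For `n ≥ k ≥ 0`, `S_{1,λ}(n,k) = C(n-1,k-1) β_{n-k,λ}^{(n)}`, where
`S_{1,λ}(n,k)` is defined by `(1/k!)(log_λ(1+t))^k = Σ_{n≥k} S_{1,λ}(n,k) t^n/n!`
and `β_{m,λ}^{(α)}` by `(t/(e_λ(t)-1))^α = Σ_{m≥0} β_{m,λ}^{(α)} t^m/m!`.
(Here `C(n-1,k-1)` follows the convention `C(m,-1) = 0` for `m ≥ 0` and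
`C(-1,-1) = 1`.) -/
theorem degStirlingFirst_eq (l : ℝ) (hl : l ≠ 0)
    (S β : ℕ → ℕ → ℝ)
    (hS : ∀ k n : ℕ, (k ! : ℝ)⁻¹ * PowerSeries.coeff n ((degLog l) ^ k)
      = S n k / (n ! : ℝ))
    (Q : PowerSeries ℝ) (hQ : PowerSeries.X * Q = degExp l - 1)
    (hβ : ∀ α m : ℕ, PowerSeries.coeff m ((Q⁻¹) ^ α) = β m α / (m ! : ℝ)) :
    ∀ n k : ℕ, k ≤ n →
      S n k =
        (if k = 0 then (if n = 0 then (1 : ℝ) else 0)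
          else ((n - 1).choose (k - 1) : ℝ)) * β (n - k) n := by
  have hfac : ∀ m : ℕ, ((m)! : ℝ) ≠ 0 := fun m => Nat.cast_ne_zero.mpr (Nat.factorial_ne_zero m)
  have hSc : ∀ n k : ℕ, S n k = (n ! : ℝ) * ((k ! : ℝ)⁻¹ * coeff n ((degLog l)^k)) := by
    intro n k
    have h := hS k n
    rw [eq_div_iff (hfac n)] at h
    rw [← h]; ring
  have hβc : ∀ m α : ℕ, β m α = (m ! : ℝ) * coeff m ((Q⁻¹)^α) := by
    intro m α
    have h := hβ α m
    rw [eq_div_iff (hfac m)] at h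
    rw [← h]; ring
  have hβ0 : ∀ α : ℕ, β 0 α = 1 := by
    intro α
    have hccP : constantCoeff (Q⁻¹) = 1 := by
      rw [PowerSeries.constantCoeff_inv, constCoeff_Q l Q hl hQ]; norm_num
    rw [hβc, coeff_zero_eq_constantCoeff, map_pow, hccP, one_pow]
    simp
  intro n
  induction n with
  | zero =>
    intro k hk
    have hk0 : k = 0 := Nat.le_zero.mp hk
    subst hk0
    rw [hSc, hβ0]
    simp [PowerSeries.coeff_one]
  | succ p IH =>
    intro k hk
    rcases Nat.eq_zero_or_pos k with hk0 | hk1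
    · subst hk0
      rw [hSc]
      simp [PowerSeries.coeff_one]
    rcases eq_or_lt_of_le hk with hdg | hlt
    · subst hdg
      rw [hSc, coeff_diag l hl, Nat.sub_self, hβ0]
      simp [mul_inv_cancel₀ (hfac (p+1))]
    -- main case : 1 ≤ k ≤ p
    obtain ⟨b, rfl⟩ : ∃ b, k = b + 1 := ⟨k-1, (Nat.succ_pred_eq_of_pos hk1).symm⟩
    have hbp : b + 1 ≤ p := Nat.lt_succ_iff.mp hlt
    obtain ⟨m, rfl⟩ : ∃ m, p = b + 1 + m := Nat.exists_eq_add_of_le hbp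
    set p := b + 1 + m with hp
    have hfp : ((p+1)! : ℝ) = ((p:ℝ)+1) * (p ! : ℝ) := by
      rw [Nat.factorial_succ]; push_cast; ring
    have hfb : ((b+1)! : ℝ) = ((b:ℝ)+1) * (b ! : ℝ) := by
      rw [Nat.factorial_succ]; push_cast; ring
    have hfm : ((m+1)! : ℝ) = ((m:ℝ)+1) * (m ! : ℝ) := by
      rw [Nat.factorial_succ]; push_cast; ring
    have hb1 : ((b:ℝ)+1) ≠ 0 := by positivity
    have hp1 : ((p:ℝ)+1) ≠ 0 := by positivity
    have hpr : ((p:ℝ)) = (b:ℝ) + m + 1 := by rw [hp]; push_cast; ring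
    have hE1 : S (p+1) (b+1) = (l*((b:ℝ)+1)-(p:ℝ)) * S p (b+1) + S p b := by
      have h := fpow_rec l hl b p
      have h' : coeff (p+1) ((degLog l)^(b+1))
          = ((l*((b:ℝ)+1)-(p:ℝ)) * coeff p ((degLog l)^(b+1))
            + ((b:ℝ)+1) * coeff p ((degLog l)^b)) / ((p:ℝ)+1) := by
        rw [eq_div_iff hp1]; linear_combination h
      rw [hSc (p+1) (b+1), hSc p (b+1), hSc p b, hfp, hfb, h']
      have hbf := hfac b
      have hpf := hfac p
      field_simp
    have hE2 : ((p:ℝ)) * β (m+1) (p+1)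
        = (b:ℝ) * β (m+1) p + ((m:ℝ)+1)*(l*((b:ℝ)+1)-(p:ℝ)) * β m p := by
      have h := Ppow_rec l Q hl hQ (b+m) m
      have e1 : b + m + 2 = p + 1 := by omega
      have e2 : b + m + 1 = p := by omega
      rw [e1, e2] at h
      push_cast at h
      rw [hβc (m+1) (p+1), hβc (m+1) p, hβc m p, hfm, hpr]
      linear_combination (((m:ℝ)+1) * (m ! : ℝ)) * h
    have hchA : ((p.choose b : ℕ) : ℝ) * b
        = ((p:ℝ)) * (if b = 0 then (0:ℝ) else ((b+m).choose (b-1) : ℝ)) := by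
      rcases Nat.eq_zero_or_pos b with hb0 | hb1'
      · subst hb0; simp
      obtain ⟨c, rfl⟩ : ∃ c, b = c + 1 := ⟨b-1, (Nat.succ_pred_eq_of_pos hb1').symm⟩
      rw [if_neg (by omega : ¬(c+1 = 0)), Nat.add_sub_cancel]
      have h := Nat.add_one_mul_choose_eq (c+1+m) c
      have h' := congrArg (fun x : ℕ => (x : ℝ)) h
      push_cast at h'
      rw [show p = c+1+m+1 from by omega] at *
      push_cast
      linear_combination -h'
    have hchB : ((p.choose b : ℕ) : ℝ) * ((m:ℝ)+1)
        = ((p:ℝ)) * (((b+m).choose b : ℕ) : ℝ) := by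
      have h1 := Nat.choose_succ_right_eq p b
      have e : p - b = m + 1 := by omega
      rw [e] at h1
      have h2 := Nat.add_one_mul_choose_eq (b+m) b
      have e2 : b + m + 1 = p := by omega
      rw [e2] at h2
      have h1' := congrArg (fun x : ℕ => (x : ℝ)) h1
      have h2' := congrArg (fun x : ℕ => (x : ℝ)) h2
      push_cast at h1' h2'
      linear_combination -h1' - h2'
    have hIH1 : S p (b+1) = (((b+m).choose b : ℕ) : ℝ) * β m p := by
      have h := IH (b+1) hbp
      rw [if_neg (by omega : ¬(b+1 = 0))] at h
      have e1 : p - 1 = b + m := by omega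
      have e2 : p - (b+1) = m := by omega
      have e3 : b + 1 - 1 = b := by omega
      rw [e1, e2, e3] at h
      exact h
    have hIH2 : S p b = (if b = 0 then (0:ℝ) else ((b+m).choose (b-1) : ℝ)) * β (m+1) p := by
      have h := IH b (by omega)
      have e2 : p - b = m + 1 := by omega
      rw [e2] at h
      rcases Nat.eq_zero_or_pos b with hb0 | hb1'
      · subst hb0
        simpa [show p ≠ 0 from by omega] using h
      · rw [if_neg (by omega : ¬(b = 0))] at h ⊢
        have e1 : p - 1 = b + m := by omega
        rw [e1] at h
        exact h
    rw [if_neg (by omega : ¬(b+1 = 0))]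
    have e1 : p + 1 - 1 = p := by omega
    have e2 : b + 1 - 1 = b := by omega
    have e3 : p + 1 - (b + 1) = m + 1 := by omega
    rw [e1, e2, e3]
    have hpne : ((p:ℝ)) ≠ 0 := by
      rw [hpr]; positivity
    rw [hE1, hIH1, hIH2]
    have key : ((p:ℝ)) * ((l*((b:ℝ)+1)-(p:ℝ)) * ((((b+m).choose b : ℕ) : ℝ) * β m p)
          + (if b = 0 then (0:ℝ) else ((b+m).choose (b-1) : ℝ)) * β (m+1) p)
        = ((p:ℝ)) * (((p.choose b : ℕ) : ℝ) * β (m+1) (p+1)) := by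
      linear_combination -(((p.choose b : ℕ) : ℝ) * hE2) - (β (m+1) p) * hchA
        - ((l*((b:ℝ)+1)-(p:ℝ)) * β m p) * hchB
    exact mul_left_cancel₀ hpne key
end

section
/- For all integers n ≥ k ≥ 0, the classical Stirling numbers of the first kind satisfy S_1(n,k) = C(n-1,k-1) B_{n-k}^{(n)}, where B_m^{(α)} denotes the Bernoulli numbers of order α. -/
open PowerSeries Finset Nat

/-- The formal logarithm `log(1+t) = Σ_{n≥1} (-1)^{n-1} t^n / n`. -/
noncomputable def logOnePlus : PowerSeries ℚ :=
  PowerSeries.mk fun n => if n = 0 then 0 else (-1 : ℚ) ^ (n - 1) / n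

lemma logOnePlus_deriv : (1 + X) * d⁄dX ℚ logOnePlus = 1 := by
  ext n
  rw [add_mul, one_mul, map_add]
  cases n with
  | zero =>
    simp [coeff_derivative, logOnePlus, coeff_mk]
  | succ m =>
    rw [coeff_succ_X_mul, coeff_derivative, coeff_derivative]
    simp only [logOnePlus, coeff_mk, coeff_one, Nat.succ_ne_zero, if_false]
    have h1 : ((m:ℚ)+1) ≠ 0 := by positivity
    have h2 : ((m:ℚ)+1+1) ≠ 0 := by positivity
    push_cast
    field_simp
    ring

lemma constantCoeff_logOnePlus : constantCoeff logOnePlus = 0 := by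
  simp [logOnePlus, ← coeff_zero_eq_constantCoeff_apply]

lemma derivative_exp' : d⁄dX ℚ (PowerSeries.exp ℚ) = PowerSeries.exp ℚ := by
  ext n
  rw [coeff_derivative, coeff_exp, coeff_exp]
  simp only [eq_ratCast, Rat.cast_div]
  rw [factorial_succ]
  push_cast
  have : (n ! : ℚ) ≠ 0 := by exact_mod_cast (Nat.factorial_pos n).ne'
  field_simp

lemma R1s (k : ℕ) : (1 + X) * d⁄dX ℚ (logOnePlus ^ (k+1))
    = ((k+1 : ℕ)) • (logOnePlus ^ k) := by
  rw [Derivation.leibniz_pow]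
  simp only [Nat.add_sub_cancel, smul_eq_mul, nsmul_eq_mul]
  have hL := logOnePlus_deriv
  linear_combination ((k+1 : ℕ) : ℚ⟦X⟧) * logOnePlus ^ k * hL

lemma R2s (Q : PowerSeries ℚ) (hQ : PowerSeries.X * Q = PowerSeries.exp ℚ - 1)
    (hc : constantCoeff Q = 1) (α : ℕ) :
    X * d⁄dX ℚ ((Q⁻¹) ^ (α+1))
      = ((α+1 : ℕ)) • ((Q⁻¹)^(α+1) - X * (Q⁻¹)^(α+1) - (Q⁻¹)^(α+2)) := by
  have hfQ : Q⁻¹ * Q = 1 := PowerSeries.inv_mul_cancel Q (by rw [hc]; exact one_ne_zero)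
  have hdQ : X * d⁄dX ℚ Q = 1 + X * Q - Q := by
    have h1 : d⁄dX ℚ (X * Q) = d⁄dX ℚ (PowerSeries.exp ℚ - 1) := by rw [hQ]
    rw [Derivation.leibniz, derivative_X, map_sub, derivative_exp',
      Derivation.map_one_eq_zero, sub_zero] at h1
    simp only [smul_eq_mul, mul_one] at h1
    have h2 : PowerSeries.exp ℚ = X * Q + 1 := by rw [eq_sub_iff_add_eq] at hQ; exact hQ.symm
    rw [h2] at h1
    linear_combination h1
  rw [Derivation.leibniz_pow, derivative_inv']
  simp only [Nat.add_sub_cancel, smul_eq_mul, nsmul_eq_mul]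
  linear_combination (-(((α+1:ℕ) : ℚ⟦X⟧) * (Q⁻¹)^(α+2))) * hdQ
    - (((α+1:ℕ) : ℚ⟦X⟧) * (Q⁻¹)^(α+1) * (X - 1)) * hfQ

lemma R1c (n k : ℕ) :
    ((n:ℚ)+1) * coeff (n+1) (logOnePlus^(k+1)) + (n:ℚ) * coeff n (logOnePlus^(k+1))
      = ((k:ℚ)+1) * coeff n (logOnePlus^k) := by
  have h := congrArg (coeff n) (R1s k)
  rw [add_mul, one_mul, map_add, map_nsmul, coeff_derivative, nsmul_eq_mul] at h
  cases n with
  | zero =>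
    rw [coeff_zero_X_mul] at h
    push_cast at h ⊢
    linear_combination h
  | succ m =>
    rw [coeff_succ_X_mul, coeff_derivative] at h
    push_cast at h ⊢
    linear_combination h

lemma R2c (Q : PowerSeries ℚ) (hQ : PowerSeries.X * Q = PowerSeries.exp ℚ - 1)
    (hc : constantCoeff Q = 1) (α m : ℕ) :
    ((α:ℚ)+1) * coeff (m+1) ((Q⁻¹)^(α+2))
      = ((α:ℚ) - m) * coeff (m+1) ((Q⁻¹)^(α+1)) - ((α:ℚ)+1) * coeff m ((Q⁻¹)^(α+1)) := by
  have h := congrArg (coeff (m+1)) (R2s Q hQ hc α)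
  rw [coeff_succ_X_mul, coeff_derivative, map_nsmul, map_sub, map_sub, coeff_succ_X_mul,
    nsmul_eq_mul] at h
  push_cast at h ⊢
  linear_combination h

lemma Bq0 (Q : PowerSeries ℚ) (hc : constantCoeff Q = 1) (α : ℕ) :
    coeff 0 ((Q⁻¹)^α) = 1 := by
  rw [coeff_zero_eq_constantCoeff_apply, map_pow, PowerSeries.constantCoeff_inv, hc]
  simp

lemma vanish {n k : ℕ} (h : n < k) : coeff n (logOnePlus ^ k) = 0 := by
  have hd : (X : ℚ⟦X⟧)^k ∣ logOnePlus ^ k :=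
    pow_dvd_pow_of_dvd (PowerSeries.X_dvd_iff.mpr constantCoeff_logOnePlus) k
  exact PowerSeries.X_pow_dvd_iff.mp hd n h

lemma key (Q : PowerSeries ℚ) (hQ : PowerSeries.X * Q = PowerSeries.exp ℚ - 1)
    (hc : constantCoeff Q = 1) :
    ∀ n k : ℕ, k + 1 ≤ n →
      (n:ℚ) * coeff n (logOnePlus^(k+1))
        = ((k:ℚ)+1) * coeff (n - (k+1)) ((Q⁻¹)^n) := by
  intro n
  induction n with
  | zero => intro k hk; omega
  | succ n IH =>
    intro k hk
    rcases k with _ | j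
    · -- k = 0
      rcases n with _ | m
      · -- n = 0
        simp only [pow_one, Nat.sub_self]
        rw [Bq0 Q hc]
        simp [logOnePlus, coeff_mk]
      · -- n = m+1
        have R := R1c (m+1) 0
        have IH1 := IH 0 (by omega)
        rw [show m + 1 - (0+1) = m from by omega] at IH1
        have hA0 : coeff (m+1) (logOnePlus ^ 0) = 0 := by
          rw [pow_zero, coeff_one]; simp
        have N := R2c Q hQ hc m m
        rw [show m + 2 - (0+1) = m+1 from by omega]
        rw [show m + 2 = m + 1 + 1 from rfl]
        have hm : ((m:ℚ)+1) ≠ 0 := by positivity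
        refine mul_left_cancel₀ hm ?_
        push_cast at R IH1 N ⊢
        linear_combination ((m:ℚ)+1) * R - ((m:ℚ)+1) * IH1 - N + ((m:ℚ)+1) * hA0
    · -- k = j+1
      by_cases hkn : j + 2 ≤ n
      · obtain ⟨c, rfl⟩ : ∃ c, n = j + 2 + c := ⟨n - (j+2), by omega⟩
        have R := R1c (j+2+c) (j+1)
        have IH1 := IH j (by omega)
        rw [show j + 2 + c - (j+1) = c+1 from by omega] at IH1
        have IH2 := IH (j+1) (by omega)
        rw [show j + 2 + c - (j+1+1) = c from by omega] at IH2
        have N := R2c Q hQ hc (j+1+c) c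
        rw [show j+1+c+2 = j+2+c+1 from by omega,
            show j+1+c+1 = j+2+c from by omega] at N
        rw [show j + 2 + c + 1 - (j+1+1) = c+1 from by omega]
        rw [show j+1+1 = j+2 from rfl]
        have hn0 : ((j:ℚ)+2+c) ≠ 0 := by positivity
        refine mul_left_cancel₀ hn0 ?_
        push_cast at R IH1 IH2 N ⊢
        linear_combination ((j:ℚ)+2+c) * R + ((j:ℚ)+2) * IH1
          - ((j:ℚ)+2+c) * IH2 - ((j:ℚ)+2) * N
      · -- n = j+1
        have hn : n = j + 1 := by omega
        subst hn
        have R := R1c (j+1) (j+1)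
        have IH1 := IH j (by omega)
        rw [show j + 1 - (j+1) = 0 from by omega, Bq0 Q hc] at IH1
        have hv : coeff (j+1) (logOnePlus ^ (j+1+1)) = 0 := vanish (by omega)
        rw [show j + 1 + 1 - (j+1+1) = 0 from by omega, Bq0 Q hc]
        have hj : ((j:ℚ)+1) ≠ 0 := by positivity
        refine mul_left_cancel₀ hj ?_
        push_cast at R IH1 hv ⊢
        linear_combination ((j:ℚ)+1) * R + ((j:ℚ)+2) * IH1 - ((j:ℚ)+1)^2 * hv

/-- For `n ≥ k ≥ 0`, `S_1(n,k) = C(n-1,k-1) B_{n-k}^{(n)}`, where `S_1(n,k)` is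
defined by `(1/k!)(log(1+t))^k = Σ_{n≥k} S_1(n,k) t^n/n!` and `B_m^{(α)}` by
`(t/(e^t-1))^α = Σ_{m≥0} B_m^{(α)} t^m/m!`.  (Here `C(n-1,k-1)` follows the
convention `C(m,-1) = 0` for `m ≥ 0` and `C(-1,-1) = 1`.) -/
theorem stirlingFirst_eq_bernoulli (S B : ℕ → ℕ → ℚ)
    (hS : ∀ k n : ℕ, (k ! : ℚ)⁻¹ * PowerSeries.coeff n (logOnePlus ^ k)
      = S n k / (n ! : ℚ))
    (Q : PowerSeries ℚ) (hQ : PowerSeries.X * Q = PowerSeries.exp ℚ - 1)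
    (hB : ∀ α m : ℕ, PowerSeries.coeff m ((Q⁻¹) ^ α) = B m α / (m ! : ℚ)) :
    ∀ n k : ℕ, k ≤ n →
      S n k =
        (if k = 0 then (if n = 0 then (1 : ℚ) else 0)
          else ((n - 1).choose (k - 1) : ℚ)) * B (n - k) n := by
  have hc : constantCoeff Q = 1 := by
    have h := congrArg (coeff 1) hQ
    rw [show (1:ℕ) = 0 + 1 from rfl, coeff_succ_X_mul, map_sub, coeff_exp, coeff_one] at h
    rw [coeff_zero_eq_constantCoeff_apply] at h
    simpa using h
  intro n k hk
  rcases k with _ | j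
  · -- k = 0
    have h := hS 0 n
    rw [pow_zero, coeff_one, Nat.factorial_zero] at h
    have hB00 : B 0 0 = 1 := by
      have h2 := hB 0 0
      rw [pow_zero, coeff_zero_eq_constantCoeff_apply, map_one] at h2
      simpa using h2.symm
    have hn0 : ((n ! : ℚ)) ≠ 0 := by exact_mod_cast (Nat.factorial_pos n).ne'
    have hSval : S n 0 = if n = 0 then (1:ℚ) else 0 := by
      rw [eq_div_iff hn0] at h
      rcases eq_or_ne n 0 with rfl | hne
      · simpa using h.symm
      · simp [hne] at h ⊢; simpa using h.symm
    rw [hSval]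
    rcases eq_or_ne n 0 with rfl | hne
    · simp [hB00]
    · simp [hne]
  · -- k = j+1
    obtain ⟨c, rfl⟩ : ∃ c, n = (j+1) + c := ⟨n - (j+1), by omega⟩
    have hkey := key Q hQ hc (j+1+c) j (by omega)
    rw [show j + 1 + c - (j+1) = c from by omega] at hkey
    have hSn := hS (j+1) (j+1+c)
    have hBn := hB (j+1+c) c
    simp only [Nat.succ_ne_zero, if_false, Nat.add_sub_cancel]
    rw [show j + 1 + c - (j + 1) = c from by omega,
        show j + 1 + c - 1 = j + c from by omega]
    -- nonzero facts
    have hfacn : ((j+1+c)! : ℚ) ≠ 0 := by exact_mod_cast (Nat.factorial_pos _).ne'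
    have hfack : (((j+1))! : ℚ) ≠ 0 := by exact_mod_cast (Nat.factorial_pos _).ne'
    have hfacc : ((c)! : ℚ) ≠ 0 := by exact_mod_cast (Nat.factorial_pos _).ne'
    have hnn : ((j:ℚ)+1+c) ≠ 0 := by positivity
    have hch : (((j+c).choose j : ℚ)) * (j ! : ℚ) * (c ! : ℚ) = ((j+c)! : ℚ) := by
      have := Nat.choose_mul_factorial_mul_factorial (Nat.le_add_right j c)
      rw [Nat.add_sub_cancel_left] at this
      exact_mod_cast this
    have hF : ((j+1+c)! : ℚ) = ((j:ℚ)+1+c) * ((j+c)! : ℚ) := by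
      rw [show j+1+c = (j+c)+1 from by omega, Nat.factorial_succ]
      push_cast; ring
    have hK : (((j+1))! : ℚ) = ((j:ℚ)+1) * (j ! : ℚ) := by
      rw [Nat.factorial_succ]; push_cast; ring
    -- extract values
    have hS2 : S (j+1+c) (j+1) = ((j+1+c)! : ℚ) * (((j+1)! : ℚ))⁻¹
        * coeff (j+1+c) (logOnePlus ^ (j+1)) := by
      rw [eq_div_iff hfacn] at hSn
      linear_combination -hSn
    have hB2 : B c (j+1+c) = (c ! : ℚ) * coeff c ((Q⁻¹) ^ (j+1+c)) := by
      rw [eq_div_iff hfacc] at hBn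
      linear_combination -hBn
    rw [hS2, hB2]
    push_cast at hkey
    -- hkey : (↑j+1+↑c) * A = (↑j+1) * Bqv
    have hA : coeff (j+1+c) (logOnePlus ^ (j+1))
        = ((j:ℚ)+1) * coeff c ((Q⁻¹) ^ (j+1+c)) / ((j:ℚ)+1+c) := by
      rw [eq_div_iff hnn]
      linear_combination hkey
    rw [hA, hF, hK]
    field_simp
    linear_combination (-coeff c ((Q⁻¹) ^ (j+1+c))) * hch
end

section
/- For all integers n ≥ k ≥ 1, the Stirling numbers of the first kind associated with a delta series f(t) satisfy S_1(n,k;f) = C(n-1,k-1) B_{n-k,f̄}^{(n)}, where B_{m,f̄}^{(α)} is defined by (t/(e^{f̄(t)}-1))^α = Σ_{m≥0} B_{m,f̄}^{(α)} t^m/m!. -/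
open PowerSeries Finset Nat

/-- Composition `f(g(t))` of formal power series (intended for `g` with zero
constant term, in which case `coeff n (g^k) = 0` for `k > n` and the truncated
sum below is the full composition). -/
noncomputable def comp {K : Type*} [CommRing K] (f g : PowerSeries K) : PowerSeries K :=
  PowerSeries.mk fun n =>
    ∑ k ∈ Finset.range (n + 1), (PowerSeries.coeff k f) * (PowerSeries.coeff n (g ^ k))

section Aux
set_option linter.unusedSectionVars false
variable {K : Type*} [Field K] [CharZero K]


lemma coeff_comp (f g : PowerSeries K) (n : ℕ) :
    PowerSeries.coeff n (comp f g)
      = ∑ k ∈ Finset.range (n + 1), (PowerSeries.coeff k f) * (PowerSeries.coeff n (g ^ k)) := by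
  simp [comp]

lemma van {Q g : PowerSeries K} (hQ : PowerSeries.X * Q = g) {i j : ℕ} (hij : i < j) :
    PowerSeries.coeff i (g ^ j) = 0 := by
  have hdvd : (PowerSeries.X : PowerSeries K) ^ j ∣ g ^ j :=
    pow_dvd_pow_of_dvd ⟨Q, hQ.symm⟩ j
  exact PowerSeries.X_pow_dvd_iff.mp hdvd i hij

lemma coeff_comp_ext {Q g : PowerSeries K} (hQ : PowerSeries.X * Q = g)
    (f : PowerSeries K) {n N : ℕ} (hn : n ≤ N) :
    PowerSeries.coeff n (comp f g)
      = ∑ k ∈ Finset.range (N + 1), (PowerSeries.coeff k f) * (PowerSeries.coeff n (g ^ k)) := by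
  rw [coeff_comp]
  apply Finset.sum_subset (Finset.range_subset_range.mpr (by omega))
  intro j hj hj'
  simp only [Finset.mem_range] at hj hj'
  rw [van hQ (by omega), mul_zero]

lemma comp_mul {Q g : PowerSeries K} (hQ : PowerSeries.X * Q = g) (a b : PowerSeries K) :
    comp (a * b) g = comp a g * comp b g := by
  ext n
  set F : ℕ × ℕ → K := fun pq =>
    (PowerSeries.coeff pq.1 a) * (PowerSeries.coeff pq.2 b)
      * (PowerSeries.coeff n (g ^ (pq.1 + pq.2))) with hF
  have hLHS : PowerSeries.coeff n (comp (a * b) g)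
      = ∑ j ∈ Finset.range (n + 1), ∑ pq ∈ Finset.HasAntidiagonal.antidiagonal j, F pq := by
    rw [coeff_comp]
    refine Finset.sum_congr rfl fun j hj => ?_
    rw [PowerSeries.coeff_mul, Finset.sum_mul]
    refine Finset.sum_congr rfl fun pq hpq => ?_
    have : pq.1 + pq.2 = j := Finset.HasAntidiagonal.mem_antidiagonal.mp hpq
    rw [hF]; simp only; rw [this]
  have hRHS : PowerSeries.coeff n (comp a g * comp b g)
      = ∑ p ∈ Finset.range (n + 1), ∑ q ∈ Finset.range (n + 1), F (p, q) := by
    rw [PowerSeries.coeff_mul]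
    have : ∀ pq ∈ Finset.HasAntidiagonal.antidiagonal n,
        (PowerSeries.coeff pq.1 (comp a g)) * (PowerSeries.coeff pq.2 (comp b g))
        = ∑ p ∈ Finset.range (n + 1), ∑ q ∈ Finset.range (n + 1),
            (PowerSeries.coeff p a * PowerSeries.coeff pq.1 (g ^ p))
            * (PowerSeries.coeff q b * PowerSeries.coeff pq.2 (g ^ q)) := by
      intro pq hpq
      have h12 := Finset.HasAntidiagonal.mem_antidiagonal.mp hpq
      rw [coeff_comp_ext hQ a (show pq.1 ≤ n by omega),
          coeff_comp_ext hQ b (show pq.2 ≤ n by omega), Finset.sum_mul_sum]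
    rw [Finset.sum_congr rfl this, Finset.sum_comm]
    refine Finset.sum_congr rfl fun p hp => ?_
    rw [Finset.sum_comm]
    refine Finset.sum_congr rfl fun q hq => ?_
    rw [hF]; simp only
    have : ∑ x ∈ Finset.HasAntidiagonal.antidiagonal n,
        PowerSeries.coeff p a * PowerSeries.coeff x.1 (g ^ p)
          * (PowerSeries.coeff q b * PowerSeries.coeff x.2 (g ^ q))
        = PowerSeries.coeff p a * PowerSeries.coeff q b *
            ∑ x ∈ Finset.HasAntidiagonal.antidiagonal n,
              PowerSeries.coeff x.1 (g ^ p) * PowerSeries.coeff x.2 (g ^ q) := by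
      rw [Finset.mul_sum]
      exact Finset.sum_congr rfl fun x _ => by ring
    rw [this, ← PowerSeries.coeff_mul, ← pow_add]
  rw [hLHS, hRHS]
  have hdisj : ((Finset.range (n+1) : Finset ℕ) : Set ℕ).PairwiseDisjoint
      (fun j => (Finset.HasAntidiagonal.antidiagonal j : Finset (ℕ × ℕ))) := by
    intro i _ j _ hij
    simp only [Finset.disjoint_left]
    intro x hx hx'
    exact hij ((Finset.HasAntidiagonal.mem_antidiagonal.mp hx).symm.trans (Finset.HasAntidiagonal.mem_antidiagonal.mp hx'))
  rw [← Finset.sum_biUnion hdisj, ← Finset.sum_product']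
  apply Finset.sum_subset
  · intro x hx
    simp only [Finset.mem_biUnion, Finset.mem_range] at hx
    obtain ⟨j, hj, hxj⟩ := hx
    have := Finset.HasAntidiagonal.mem_antidiagonal.mp hxj
    simp only [Finset.mem_product, Finset.mem_range]
    omega
  · intro x hx hx'
    simp only [Finset.mem_product, Finset.mem_range] at hx
    simp only [Finset.mem_biUnion, Finset.mem_range] at hx'
    have hgt : n < x.1 + x.2 := by
      by_contra h
      exact hx' ⟨x.1 + x.2, by omega, Finset.HasAntidiagonal.mem_antidiagonal.mpr rfl⟩
    rw [hF]; simp only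
    rw [van hQ hgt, mul_zero]

lemma comp_one (g : PowerSeries K) : comp (1 : PowerSeries K) g = 1 := by
  ext n
  rw [coeff_comp]
  simp [PowerSeries.coeff_one]

lemma comp_pow {Q g : PowerSeries K} (hQ : PowerSeries.X * Q = g)
    (h : PowerSeries K) (k : ℕ) : comp (h ^ k) g = (comp h g) ^ k := by
  induction k with
  | zero => simpa using comp_one g
  | succ k ih => rw [pow_succ, comp_mul hQ, ih, pow_succ]

/-- residue-style substitution lemma at a single coefficient -/
lemma coeff_deriv_comp_mul {Q g : PowerSeries K} (hQ : PowerSeries.X * Q = g)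
    (F V : PowerSeries K) {n : ℕ} (hn : 1 ≤ n) :
    PowerSeries.coeff (n - 1) (d⁄dX K (comp F g) * V)
      = ∑ j ∈ Finset.range (n + 1), PowerSeries.coeff j F
          * PowerSeries.coeff (n - 1) (d⁄dX K (g ^ j) * V) := by
  rw [PowerSeries.coeff_mul]
  have step : ∀ p ∈ Finset.HasAntidiagonal.antidiagonal (n - 1),
      PowerSeries.coeff p.1 (d⁄dX K (comp F g)) * PowerSeries.coeff p.2 V
        = ∑ j ∈ Finset.range (n + 1), PowerSeries.coeff j F
            * (PowerSeries.coeff p.1 (d⁄dX K (g ^ j)) * PowerSeries.coeff p.2 V) := by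
    intro p hp
    have hp1 : p.1 ≤ n - 1 := Finset.HasAntidiagonal.antidiagonal.fst_le hp
    rw [PowerSeries.coeff_derivative, coeff_comp_ext hQ F (show p.1 + 1 ≤ n by omega),
      Finset.sum_mul, Finset.sum_mul]
    exact Finset.sum_congr rfl fun j _ => by rw [PowerSeries.coeff_derivative]; ring
  rw [Finset.sum_congr rfl step, Finset.sum_comm]
  exact Finset.sum_congr rfl fun j _ => by rw [← Finset.mul_sum, PowerSeries.coeff_mul]

lemma resid_zero {Q : PowerSeries K} (hQ0 : PowerSeries.constantCoeff Q ≠ 0)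
    {g : PowerSeries K} (hQ : PowerSeries.X * Q = g) {r : ℕ} (hr : 2 ≤ r) :
    PowerSeries.coeff (r - 1) ((Q⁻¹) ^ r * d⁄dX K g) = 0 := by
  have hQinv : Q⁻¹ * Q = 1 := PowerSeries.inv_mul_cancel Q hQ0
  have hDg : d⁄dX K g = Q + PowerSeries.X * d⁄dX K Q := by
    rw [← hQ, Derivation.leibniz]
    simp only [smul_eq_mul, PowerSeries.derivative_X, mul_one]
    ring
  have hsplit : (Q⁻¹) ^ r * d⁄dX K g
      = (Q⁻¹) ^ (r - 1) + PowerSeries.X * ((Q⁻¹) ^ r * d⁄dX K Q) := by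
    rw [hDg, mul_add]
    congr 1
    · have : r = (r - 1) + 1 := by omega
      rw [this, pow_succ, mul_assoc, hQinv, mul_one]
      simp [this.symm]
    · ring
  have hpow : d⁄dX K ((Q⁻¹) ^ (r - 1))
      = -((r - 1 : ℕ) • ((Q⁻¹) ^ r * d⁄dX K Q)) := by
    rw [Derivation.leibniz_pow, PowerSeries.derivative_inv']
    have h2 : (Q⁻¹) ^ (r - 1 - 1) * (Q⁻¹) ^ 2 = (Q⁻¹) ^ r := by
      rw [← pow_add]; congr 1; omega
    simp only [smul_eq_mul, nsmul_eq_mul]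
    rw [← h2]; ring
  set c1 := PowerSeries.coeff (r - 1) ((Q⁻¹) ^ (r - 1)) with hc1
  set c2 := PowerSeries.coeff (r - 2) ((Q⁻¹) ^ r * d⁄dX K Q) with hc2
  have hgoal : PowerSeries.coeff (r - 1) ((Q⁻¹) ^ r * d⁄dX K g) = c1 + c2 := by
    rw [hsplit, map_add]
    congr 1
    have : r - 1 = (r - 2) + 1 := by omega
    rw [this, PowerSeries.coeff_succ_X_mul]
  have hkey : (r - 1 : ℕ) • c1 = -((r - 1 : ℕ) • c2) := by
    have := congrArg (PowerSeries.coeff (r - 2)) hpow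
    rw [PowerSeries.coeff_derivative] at this
    have hidx : r - 2 + 1 = r - 1 := by omega
    rw [hidx] at this
    rw [map_neg, map_nsmul] at this
    rw [← this, nsmul_eq_mul, mul_comm]
    congr 2
    exact_mod_cast congrArg Nat.cast hidx.symm
  have hne : ((r - 1 : ℕ) : K) ≠ 0 := Nat.cast_ne_zero.mpr (by omega)
  rw [hgoal]
  have : ((r - 1 : ℕ) : K) * (c1 + c2) = 0 := by
    rw [mul_add]
    have h1 : ((r - 1 : ℕ) : K) * c1 = (r - 1 : ℕ) • c1 := (nsmul_eq_mul _ _).symm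
    have h2 : ((r - 1 : ℕ) : K) * c2 = (r - 1 : ℕ) • c2 := (nsmul_eq_mul _ _).symm
    rw [h1, h2, hkey]; ring
  exact (mul_eq_zero.mp this).resolve_left hne

lemma pow_mul_inv_pow {Q : PowerSeries K} (hQ0 : PowerSeries.constantCoeff Q ≠ 0)
    {s t : ℕ} (h : s ≤ t) : Q ^ s * (Q⁻¹) ^ t = (Q⁻¹) ^ (t - s) := by
  have ht : (Q⁻¹) ^ t = (Q⁻¹) ^ s * (Q⁻¹) ^ (t - s) := by rw [← pow_add]; congr 1; omega
  rw [ht, ← mul_assoc, ← mul_pow, PowerSeries.mul_inv_cancel Q hQ0, one_pow, one_mul]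

lemma coeff_deriv_gpow {Q g : PowerSeries K} (hQ0 : PowerSeries.constantCoeff Q ≠ 0)
    (hQ : PowerSeries.X * Q = g) {n j : ℕ} (hj1 : 1 ≤ j) (hjn : j ≤ n) :
    PowerSeries.coeff (n - 1) (d⁄dX K (g ^ j) * (Q⁻¹) ^ n)
      = if j = n then (n : K) else 0 := by
  have hgj : g ^ (j - 1) = PowerSeries.X ^ (j - 1) * Q ^ (j - 1) := by rw [← hQ, mul_pow]
  have key : d⁄dX K (g ^ j) * (Q⁻¹) ^ n
      = (j : ℕ) • (PowerSeries.X ^ (j - 1) * ((Q⁻¹) ^ (n - (j - 1)) * d⁄dX K g)) := by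
    rw [Derivation.leibniz_pow, hgj]
    simp only [smul_eq_mul, nsmul_eq_mul]
    rw [← pow_mul_inv_pow hQ0 (show j - 1 ≤ n by omega)]
    ring
  rw [key, map_nsmul, nsmul_eq_mul]
  have hidx : n - 1 = (n - j) + (j - 1) := by omega
  rw [hidx, PowerSeries.coeff_X_pow_mul]
  by_cases hjn' : j = n
  · subst hjn'
    rw [if_pos rfl, show j - j = 0 from by omega, show j - (j - 1) = 1 from by omega, pow_one,
      PowerSeries.coeff_zero_eq_constantCoeff_apply, map_mul, PowerSeries.constantCoeff_inv]
    have hcDg : PowerSeries.constantCoeff (d⁄dX K g) = PowerSeries.constantCoeff Q := by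
      rw [← PowerSeries.coeff_zero_eq_constantCoeff_apply, PowerSeries.coeff_derivative, ← hQ,
        PowerSeries.coeff_succ_X_mul, PowerSeries.coeff_zero_eq_constantCoeff_apply]
      push_cast; ring
    rw [hcDg, inv_mul_cancel₀ hQ0, mul_one]
  · rw [if_neg hjn']
    have hr2 : 2 ≤ n - (j - 1) := by omega
    have h0 := resid_zero hQ0 hQ hr2
    rw [show n - j = n - (j - 1) - 1 from by omega, h0, mul_zero]

end Aux

/-- For `n ≥ k ≥ 1`, `S_1(n,k;f) = C(n-1,k-1) B_{n-k,f̄}^{(n)}`, where `S_1` is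
defined from the compositional inverse `ē` of `e^{f̄(t)} - 1`, and
`B_{m,f̄}^{(α)}` by `(t/(e^{f̄(t)}-1))^α = Σ_{m≥0} B_{m,f̄}^{(α)} t^m/m!`. -/
theorem assocStirlingFirst_eq_bernoulli {K : Type*} [Field K] [CharZero K]
    (f fbar : PowerSeries K)
    (hf0 : PowerSeries.constantCoeff f = 0) (hf1 : PowerSeries.coeff 1 f ≠ 0)
    (hinv : comp f fbar = PowerSeries.X ∧ comp fbar f = PowerSeries.X)
    (g : PowerSeries K) (hg : g = comp (PowerSeries.exp K) fbar - 1)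
    (ebar : PowerSeries K)
    (hebar : comp g ebar = PowerSeries.X ∧ comp ebar g = PowerSeries.X)
    (S1 : ℕ → ℕ → K) (B : ℕ → ℕ → K)
    (hS1 : ∀ k n : ℕ, (k ! : K)⁻¹ * PowerSeries.coeff n (ebar ^ k)
      = S1 n k / (n ! : K))
    (Q : PowerSeries K) (hQ : PowerSeries.X * Q = g)
    (hB : ∀ α m : ℕ, PowerSeries.coeff m ((Q⁻¹) ^ α) = B m α / (m ! : K)) :
    ∀ n k : ℕ, 1 ≤ k → k ≤ n →
      S1 n k = ((n - 1).choose (k - 1) : K) * B (n - k) n := by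
  intro n k hk hkn
  have hn : 1 ≤ n := le_trans hk hkn
  -- constant coefficient of Q is nonzero
  have hQ0 : PowerSeries.constantCoeff Q ≠ 0 := by
    have h1 := congrArg (PowerSeries.coeff 1) hebar.2
    rw [coeff_comp] at h1
    simp only [Finset.sum_range_succ, Finset.sum_range_zero, zero_add, pow_zero, pow_one,
      PowerSeries.coeff_one, PowerSeries.coeff_X, if_neg (one_ne_zero), if_pos rfl,
      mul_zero] at h1
    have hg1 : PowerSeries.coeff 1 g = PowerSeries.constantCoeff Q := by
      rw [← hQ, PowerSeries.coeff_succ_X_mul, PowerSeries.coeff_zero_eq_constantCoeff_apply]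
    rw [hg1] at h1
    intro h0
    rw [h0, mul_zero] at h1
    exact one_ne_zero h1.symm
  have hcp : comp (ebar ^ k) g = PowerSeries.X ^ k := by rw [comp_pow hQ, hebar.2]
  set c := PowerSeries.coeff n (ebar ^ k) with hc
  set u := (Q⁻¹) ^ n with hu
  have hD : d⁄dX K (comp (ebar ^ k) g) = (k : ℕ) • (PowerSeries.X ^ (k - 1)) := by
    rw [hcp, Derivation.leibniz_pow, PowerSeries.derivative_X]
    simp [smul_eq_mul]
  have hA1 : PowerSeries.coeff (n - 1) (d⁄dX K (comp (ebar ^ k) g) * u)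
      = (k : K) * PowerSeries.coeff (n - k) u := by
    rw [hD, smul_mul_assoc, map_nsmul, nsmul_eq_mul]
    congr 1
    rw [show n - 1 = (n - k) + (k - 1) from by omega, PowerSeries.coeff_X_pow_mul]
  have hA2 : PowerSeries.coeff (n - 1) (d⁄dX K (comp (ebar ^ k) g) * u)
      = (n : K) * c := by
    rw [coeff_deriv_comp_mul hQ _ _ hn]
    rw [Finset.sum_eq_single n]
    · rw [coeff_deriv_gpow hQ0 hQ hn le_rfl, if_pos rfl, mul_comm]
    · intro j hj hjn
      rcases Nat.eq_zero_or_pos j with h0 | h1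
      · subst h0
        simp
      · rw [coeff_deriv_gpow hQ0 hQ h1 (by simp only [Finset.mem_range] at hj; omega),
          if_neg hjn, mul_zero]
    · intro h
      exact absurd (Finset.mem_range.mpr (by omega)) h
  have main : (n : K) * c = (k : K) * (B (n - k) n / ((n - k)! : K)) := by
    rw [← hA2, hA1, hu, hB]
  -- final arithmetic
  have hS : S1 n k = ((n ! : K)) * (((k ! : K))⁻¹ * c) := by
    have h := hS1 k n
    have hfn : ((n ! : K)) ≠ 0 := Nat.cast_ne_zero.mpr (Nat.factorial_ne_zero n)
    rw [eq_div_iff hfn] at h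
    rw [← h]; ring
  have hchoose : (((n - 1).choose (k - 1) : ℕ) : K)
      = ((n - 1)! : K) / (((k - 1)! : K) * ((n - k)! : K)) := by
    rw [Nat.cast_choose K (show k - 1 ≤ n - 1 by omega),
      show (n - 1) - (k - 1) = n - k from by omega]
  have hnfac : (n ! : K) = (n : K) * ((n - 1)! : K) := by
    rw [← Nat.mul_factorial_pred (show n ≠ 0 by omega)]; push_cast; ring
  have hkfac : (k ! : K) = (k : K) * ((k - 1)! : K) := by
    rw [← Nat.mul_factorial_pred (show k ≠ 0 by omega)]; push_cast; ring
  have hn0 : (n : K) ≠ 0 := Nat.cast_ne_zero.mpr (by omega)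
  have hk0 : (k : K) ≠ 0 := Nat.cast_ne_zero.mpr (by omega)
  have h1 : ((n - 1)! : K) ≠ 0 := Nat.cast_ne_zero.mpr (Nat.factorial_ne_zero _)
  have h2 : ((k - 1)! : K) ≠ 0 := Nat.cast_ne_zero.mpr (Nat.factorial_ne_zero _)
  have h3 : ((n - k)! : K) ≠ 0 := Nat.cast_ne_zero.mpr (Nat.factorial_ne_zero _)
  have main2 : (n : K) * c * ((n - k)! : K) = (k : K) * B (n - k) n := by
    rw [main]
    field_simp
  have hcval : c = (k : K) * B (n - k) n / ((n : K) * ((n - k)! : K)) := by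
    field_simp
    linear_combination main2
  rw [hS, hchoose, hnfac, hkfac, hcval]
  field_simp
end

section
/- Let f(t) be a delta series over a field of characteristic zero, write e^{f̄(t)} = Σ_{n≥0} p_n t^n/n! with p_0 = 1. For all integers n ≥ k ≥ 0, the partial Bell polynomial B_{n,k}(p_2/2, p_3/3, …, p_{n-k+2}/(n-k+2)) equals Σ_{j=0}^{k} C(n+k, k-j) (n!/(n+k)!) (-p_1)^{k-j} S_2(n+j, j; f), where S_2(m,j;f) are the Stirling numbers of the second kind associated with f. -/
open PowerSeries Finset Nat

/-- Write `e^{f̄(t)} = Σ p_n t^n/n!` with `p_0 = 1`.  For `n ≥ k ≥ 0`, the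
partial Bell polynomial `B_{n,k}(p_2/2, …, p_{n-k+2}/(n-k+2))` (encoded via its
defining generating function with `x_m = p_{m+1}/(m+1)`) equals
`Σ_{j=0}^{k} C(n+k, k-j) (n!/(n+k)!) (-p_1)^{k-j} S_2(n+j, j; f)`. -/
theorem bell_eq_sum_stirlingSecond {K : Type*} [Field K] [CharZero K]
    (f fbar : PowerSeries K)
    (hf0 : PowerSeries.constantCoeff f = 0) (hf1 : PowerSeries.coeff 1 f ≠ 0)
    (hinv : comp f fbar = PowerSeries.X ∧ comp fbar f = PowerSeries.X)
    (g : PowerSeries K) (hg : g = comp (PowerSeries.exp K) fbar - 1)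
    (p : ℕ → K)
    (hp : ∀ n : ℕ, PowerSeries.coeff n (comp (PowerSeries.exp K) fbar)
      = p n / (n ! : K))
    (S2 : ℕ → ℕ → K)
    (hS2 : ∀ k n : ℕ, (k ! : K)⁻¹ * PowerSeries.coeff n (g ^ k)
      = S2 n k / (n ! : K))
    (Bell : ℕ → ℕ → K)
    (hBell : ∀ k n : ℕ, (k ! : K)⁻¹ * PowerSeries.coeff n
        ((PowerSeries.mk fun m =>
          if m = 0 then 0 else (p (m + 1) / ((m : K) + 1)) / (m ! : K)) ^ k)
      = Bell n k / (n ! : K)) :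
    ∀ n k : ℕ, k ≤ n →
      Bell n k = ∑ j ∈ Finset.range (k + 1),
        ((n + k).choose (k - j) : K) * ((n ! : K) / ((n + k)! : K)) *
          (-p 1) ^ (k - j) * S2 (n + j) j := by
  intro n k hkn
  set h : PowerSeries K := PowerSeries.mk fun m =>
      if m = 0 then 0 else (p (m + 1) / ((m : K) + 1)) / (m ! : K) with hh
  -- p 0 = 1
  have hp0 : p 0 = 1 := by
    have h1 : PowerSeries.coeff 0 (comp (PowerSeries.exp K) fbar) = 1 := by
      simp [comp, PowerSeries.coeff_mk, PowerSeries.exp]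
    have := hp 0
    rw [h1] at this
    simpa using this.symm
  -- coefficients of g
  have hgc : ∀ m : ℕ, PowerSeries.coeff m g
      = p m / (m ! : K) - if m = 0 then 1 else 0 := by
    intro m
    rw [hg, map_sub, hp, PowerSeries.coeff_one]
  -- X * h = g - C (p 1) * X
  have hXh : PowerSeries.X * h = g - PowerSeries.C (p 1) * PowerSeries.X := by
    ext m
    rcases m with _ | m
    · rw [map_sub, PowerSeries.coeff_zero_X_mul, hgc 0]
      simp [hp0]
    · rw [PowerSeries.coeff_succ_X_mul, map_sub, hgc (m + 1)]
      rcases m with _ | r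
      · simp [hh]
      · have hne : (r : ℕ) + 1 + 1 ≠ 1 := by omega
        rw [hh]
        simp only [PowerSeries.coeff_mk, PowerSeries.coeff_C_mul, PowerSeries.coeff_X,
          if_neg hne, Nat.succ_ne_zero, if_false, mul_zero, sub_zero]
        rw [div_div]
        congr 1
        conv_rhs => rw [Nat.factorial_succ]
        push_cast
        ring
  -- coefficient shift
  have hshift : PowerSeries.coeff n (h ^ k)
      = PowerSeries.coeff (n + k) ((g - PowerSeries.C (p 1) * PowerSeries.X) ^ k) := by
    rw [← hXh, mul_pow, mul_comm ((PowerSeries.X : PowerSeries K) ^ k) (h ^ k),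
      PowerSeries.coeff_mul_X_pow]
  -- binomial expansion of the coefficient
  have hexp : PowerSeries.coeff (n + k) ((g - PowerSeries.C (p 1) * PowerSeries.X) ^ k)
      = ∑ j ∈ Finset.range (k + 1),
          (-p 1) ^ (k - j) * (k.choose j : K) * PowerSeries.coeff (n + j) (g ^ j) := by
    have hsub : g - PowerSeries.C (p 1) * PowerSeries.X
        = g + PowerSeries.C (-p 1) * PowerSeries.X := by
      rw [map_neg]; ring
    rw [hsub, add_pow, map_sum]
    refine Finset.sum_congr rfl fun j hj => ?_
    have hjk : j ≤ k := Nat.lt_succ_iff.mp (Finset.mem_range.mp hj)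
    have h1 : (PowerSeries.C (-p 1) * PowerSeries.X) ^ (k - j)
        = PowerSeries.C ((-p 1) ^ (k - j)) * PowerSeries.X ^ (k - j) := by
      rw [mul_pow, map_pow]
    rw [h1]
    have h2 : g ^ j * (PowerSeries.C ((-p 1) ^ (k - j)) * PowerSeries.X ^ (k - j))
          * (k.choose j : PowerSeries K)
        = PowerSeries.C ((-p 1) ^ (k - j) * (k.choose j : K))
          * (g ^ j * PowerSeries.X ^ (k - j)) := by
      have hc : ((k.choose j : ℕ) : PowerSeries K)
          = PowerSeries.C ((k.choose j : ℕ) : K) :=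
        (map_natCast (PowerSeries.C : K →+* PowerSeries K) _).symm
      rw [hc, map_mul]
      ring
    rw [h2, PowerSeries.coeff_C_mul]
    have h3 : n + k = n + j + (k - j) := by omega
    rw [h3, PowerSeries.coeff_mul_X_pow]
  -- nonvanishing facts
  have hnfac : ((n : ℕ)! : K) ≠ 0 := Nat.cast_ne_zero.mpr (Nat.factorial_ne_zero n)
  have hkfac : ((k : ℕ)! : K) ≠ 0 := Nat.cast_ne_zero.mpr (Nat.factorial_ne_zero k)
  -- Bell n k in terms of the coefficient
  have hB : Bell n k = (n ! : K) * (((k)! : K)⁻¹ * PowerSeries.coeff n (h ^ k)) := by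
    rw [hBell k n]
    field_simp
  rw [hB, hshift, hexp, Finset.mul_sum, Finset.mul_sum]
  refine Finset.sum_congr rfl fun j hj => ?_
  have hjk : j ≤ k := Nat.lt_succ_iff.mp (Finset.mem_range.mp hj)
  -- coefficient of g^j in terms of S2
  have hgj : PowerSeries.coeff (n + j) (g ^ j)
      = (j ! : K) * (S2 (n + j) j / ((n + j)! : K)) := by
    have hjfac : ((j : ℕ)! : K) ≠ 0 := Nat.cast_ne_zero.mpr (Nat.factorial_ne_zero j)
    rw [← hS2 j (n + j)]
    field_simp
  rw [hgj]
  -- factorial identities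
  have e1 : ((k)! : K) = (k.choose j : K) * (j ! : K) * ((k - j)! : K) := by
    exact_mod_cast congrArg (Nat.cast : ℕ → K)
      (Nat.choose_mul_factorial_mul_factorial hjk).symm
  have e2 : (((n + k))! : K)
      = ((n + k).choose (k - j) : K) * ((k - j)! : K) * ((n + j)! : K) := by
    have hle : k - j ≤ n + k := by omega
    have := Nat.choose_mul_factorial_mul_factorial hle
    have h4 : n + k - (k - j) = n + j := by omega
    rw [h4] at this
    exact_mod_cast congrArg (Nat.cast : ℕ → K) this.symm
  have hch1 : (k.choose j : K) ≠ 0 :=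
    Nat.cast_ne_zero.mpr (Nat.choose_pos hjk).ne'
  have hch2 : ((n + k).choose (k - j) : K) ≠ 0 :=
    Nat.cast_ne_zero.mpr (Nat.choose_pos (by omega : k - j ≤ n + k)).ne'
  have hjf : ((j : ℕ)! : K) ≠ 0 := Nat.cast_ne_zero.mpr (Nat.factorial_ne_zero j)
  have hkjf : (((k - j) : ℕ)! : K) ≠ 0 := Nat.cast_ne_zero.mpr (Nat.factorial_ne_zero _)
  have hnjf : (((n + j) : ℕ)! : K) ≠ 0 := Nat.cast_ne_zero.mpr (Nat.factorial_ne_zero _)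
  rw [e1, e2]
  field_simp
end

section
/- Let f(t) be a delta series, e^{f̄(t)} = Σ_{n≥0} p_n t^n/n! with p_1 = f̄'(0) ≠ 0, and let B_{n,f̄}^{(α)} be defined by (t/(e^{f̄(t)}-1))^α = Σ_{n≥0} B_{n,f̄}^{(α)} t^n/n!. Then for all n ≥ 0, B_{n,f̄}^{(α)} = Σ_{k=0}^{n} (-α)_k p_1^{-α-k} B_{n,k}(p_2/2, p_3/3, …, p_{n-k+2}/(n-k+2)), where (-α)_k is the falling factorial and B_{n,k} is the partial Bell polynomial. -/
open PowerSeries Finset Nat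

set_option linter.unusedSectionVars false

section Aux
variable {K : Type*} [Field K] [CharZero K]

lemma coeff_mul_congr (A A' B : PowerSeries K) (n : ℕ)
    (h : ∀ m ≤ n, PowerSeries.coeff m A = PowerSeries.coeff m A') :
    PowerSeries.coeff n (A * B) = PowerSeries.coeff n (A' * B) := by
  rw [PowerSeries.coeff_mul, PowerSeries.coeff_mul]
  refine Finset.sum_congr rfl fun q hq => ?_
  have hq1 : q.1 ≤ n := by
    have := Finset.HasAntidiagonal.mem_antidiagonal.mp hq
    omega
  rw [h q.1 hq1]

lemma coeff_pow_of_lt (R : PowerSeries K) (hR : PowerSeries.constantCoeff R = 0)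
    {n k : ℕ} (h : n < k) : PowerSeries.coeff n (R ^ k) = 0 := by
  have hX : (PowerSeries.X : PowerSeries K) ∣ R := PowerSeries.X_dvd_iff.mpr hR
  have hXk : (PowerSeries.X : PowerSeries K) ^ k ∣ R ^ k := pow_dvd_pow_of_dvd hX k
  exact (PowerSeries.X_pow_dvd_iff.mp hXk) n h

noncomputable def cc (p1 : K) (β : ℤ) (k : ℕ) : K :=
  (∏ i ∈ Finset.range k, ((β : K) - (i : K))) / (k ! : K) * p1 ^ (β - (k : ℤ))

lemma cc_zero (p1 : K) (β : ℤ) : cc p1 β 0 = p1 ^ β := by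
  simp [cc]

lemma cc_succ (p1 : K) (hp1 : p1 ≠ 0) (β : ℤ) (k : ℕ) :
    cc p1 (β + 1) (k + 1) = p1 * cc p1 β (k + 1) + cc p1 β k := by
  have hprod : (∏ i ∈ Finset.range (k + 1), ((((β + 1 : ℤ)) : K) - (i : K)))
      = (∏ i ∈ Finset.range (k + 1), ((β : K) - (i : K)))
        + ((k : K) + 1) * ∏ i ∈ Finset.range k, ((β : K) - (i : K)) := by
    rw [Finset.prod_range_succ' (fun i => (((β + 1 : ℤ)) : K) - (i : K)),
      Finset.prod_range_succ (fun i => ((β : K) - (i : K)))]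
    have : ∀ i ∈ Finset.range k, (((β + 1 : ℤ)) : K) - ((i + 1 : ℕ) : K)
        = (β : K) - (i : K) := by
      intro i _; push_cast; ring
    rw [Finset.prod_congr rfl this]
    push_cast
    ring
  have hz1 : p1 ^ (β + 1 - ((k : ℤ) + 1)) = p1 ^ (β - (k : ℤ) - 1) * p1 := by
    rw [← zpow_add_one₀ hp1]; ring_nf
  have hz2 : p1 ^ (β - (k : ℤ)) = p1 ^ (β - (k : ℤ) - 1) * p1 := by
    rw [← zpow_add_one₀ hp1]; ring_nf
  have hk : ((k ! : K)) ≠ 0 := Nat.cast_ne_zero.mpr (Nat.factorial_ne_zero k)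
  have hk1 : (((k + 1)! : K)) ≠ 0 := Nat.cast_ne_zero.mpr (Nat.factorial_ne_zero (k + 1))
  simp only [cc]
  push_cast
  rw [show (β : ℤ) + 1 - ((k : ℤ) + 1) = β - (k : ℤ) - 1 + 1 by ring] at *
  rw [show (β : ℤ) - ((k : ℤ) + 1) = β - (k : ℤ) - 1 by ring]
  rw [zpow_add_one₀ hp1, hz2]
  push_cast at hprod
  rw [hprod, Nat.factorial_succ]
  push_cast
  have hk2 : ((k : K) + 1) ≠ 0 := by
    have h := Nat.cast_ne_zero (R := K).mpr (Nat.succ_ne_zero k)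
    push_cast at h
    exact h
  field_simp

noncomputable def GG (p1 : K) (R : PowerSeries K) (β : ℤ) (N : ℕ) : PowerSeries K :=
  ∑ k ∈ Finset.range (N + 1), PowerSeries.C (cc p1 β k) * R ^ k

lemma coeff_GG (p1 : K) (R : PowerSeries K) (β : ℤ) (N n : ℕ) :
    PowerSeries.coeff n (GG p1 R β N)
      = ∑ k ∈ Finset.range (N + 1), cc p1 β k * PowerSeries.coeff n (R ^ k) := by
  rw [GG, map_sum]
  exact Finset.sum_congr rfl fun k _ => by rw [PowerSeries.coeff_C_mul]

lemma coeff_GG_mul (p1 : K) (hp1 : p1 ≠ 0) (R : PowerSeries K)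
    (hR : PowerSeries.constantCoeff R = 0) (β : ℤ) (N n : ℕ) (hn : n ≤ N) :
    PowerSeries.coeff n (GG p1 R β N * (PowerSeries.C p1 + R))
      = PowerSeries.coeff n (GG p1 R (β + 1) N) := by
  have expand : GG p1 R β N * (PowerSeries.C p1 + R)
      = (∑ k ∈ Finset.range (N + 1), PowerSeries.C (p1 * cc p1 β k) * R ^ k)
        + ∑ k ∈ Finset.range (N + 1), PowerSeries.C (cc p1 β k) * R ^ (k + 1) := by
    rw [GG, mul_add, Finset.sum_mul, Finset.sum_mul]
    congr 1
    · exact Finset.sum_congr rfl fun k _ => by rw [map_mul]; ring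
    · exact Finset.sum_congr rfl fun k _ => by rw [pow_succ]; ring
  rw [expand, map_add, map_sum, map_sum, coeff_GG]
  have e1 : ∀ k ∈ Finset.range (N + 1),
      PowerSeries.coeff n (PowerSeries.C (p1 * cc p1 β k) * R ^ k)
        = p1 * cc p1 β k * PowerSeries.coeff n (R ^ k) :=
    fun k _ => PowerSeries.coeff_C_mul _ _ _
  have e2 : ∀ k ∈ Finset.range (N + 1),
      PowerSeries.coeff n (PowerSeries.C (cc p1 β k) * R ^ (k + 1))
        = cc p1 β k * PowerSeries.coeff n (R ^ (k + 1)) :=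
    fun k _ => PowerSeries.coeff_C_mul _ _ _
  rw [Finset.sum_congr rfl e1, Finset.sum_congr rfl e2]
  -- second: drop last term (k = N) since coeff n (R^(N+1)) = 0
  rw [Finset.sum_range_succ (fun k => cc p1 β k * PowerSeries.coeff n (R ^ (k + 1)))]
  rw [coeff_pow_of_lt R hR (by omega : n < N + 1), mul_zero, add_zero]
  -- target side: split off k = 0
  rw [Finset.sum_range_succ' (fun k => cc p1 (β + 1) k * PowerSeries.coeff n (R ^ k))]
  rw [Finset.sum_range_succ' (fun k => p1 * cc p1 β k * PowerSeries.coeff n (R ^ k))]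
  have e3 : ∀ k ∈ Finset.range N,
      cc p1 (β + 1) (k + 1) * PowerSeries.coeff n (R ^ (k + 1))
        = p1 * cc p1 β (k + 1) * PowerSeries.coeff n (R ^ (k + 1))
          + cc p1 β k * PowerSeries.coeff n (R ^ (k + 1)) := by
    intro k _
    rw [cc_succ p1 hp1 β k]; ring
  rw [Finset.sum_congr rfl e3, Finset.sum_add_distrib]
  rw [cc_zero, cc_zero, zpow_add_one₀ hp1]
  ring

lemma key_s10 (p1 : K) (hp1 : p1 ≠ 0) (R : PowerSeries K)
    (hR : PowerSeries.constantCoeff R = 0)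
    (u : (PowerSeries K)ˣ) (hu : (u : PowerSeries K) = PowerSeries.C p1 + R) (β : ℤ) :
    ∀ N n : ℕ, n ≤ N →
      PowerSeries.coeff n ((u ^ β : (PowerSeries K)ˣ) : PowerSeries K)
        = PowerSeries.coeff n (GG p1 R β N) := by
  induction β using Int.induction_on with
  | zero =>
    intro N n hn
    rw [zpow_zero]
    rw [coeff_GG]
    have : ∀ k ∈ Finset.range (N + 1), k ≠ 0 →
        cc p1 0 k * PowerSeries.coeff n (R ^ k) = 0 := by
      intro k _ hk0
      obtain ⟨k', rfl⟩ := Nat.exists_eq_succ_of_ne_zero hk0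
      have : (∏ i ∈ Finset.range (k' + 1), ((((0 : ℤ)) : K) - (i : K))) = 0 :=
        Finset.prod_eq_zero (Finset.mem_range.mpr (Nat.succ_pos k')) (by simp)
      rw [cc, this]
      simp
    rw [Finset.sum_eq_single_of_mem 0 (Finset.mem_range.mpr (Nat.succ_pos N))
      (fun k hk hk0 => this k hk hk0)]
    rw [cc_zero, zpow_zero, pow_zero]
    simp
  | succ m ih =>
    intro N n hn
    have hcast : ((m : ℤ) + 1) = ((m + 1 : ℕ) : ℤ) := by push_cast; ring
    rw [zpow_add_one, Units.val_mul, hu]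
    rw [coeff_mul_congr _ (GG p1 R m N) _ n (fun j hj => ih N j (le_trans hj hn))]
    exact coeff_GG_mul p1 hp1 R hR m N n hn
  | pred m ih =>
    intro N n hn
    have step : (u ^ (-(m : ℤ) - 1) : (PowerSeries K)ˣ)
        = (u ^ (-(m : ℤ)) : (PowerSeries K)ˣ) * u⁻¹ := zpow_sub_one u (-(m : ℤ))
    rw [step, Units.val_mul]
    rw [coeff_mul_congr _ (GG p1 R (-(m : ℤ)) N) _ n (fun j hj => ih N j (le_trans hj hn))]
    have h2 : ∀ j ≤ n, PowerSeries.coeff j (GG p1 R (-(m : ℤ)) N)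
        = PowerSeries.coeff j (GG p1 R (-(m : ℤ) - 1) N * (PowerSeries.C p1 + R)) := by
      intro j hj
      rw [coeff_GG_mul p1 hp1 R hR (-(m : ℤ) - 1) N j (le_trans hj hn)]
      norm_num
    rw [coeff_mul_congr _ (GG p1 R (-(m : ℤ) - 1) N * (PowerSeries.C p1 + R)) _ n h2]
    rw [mul_assoc]
    have huv : (PowerSeries.C p1 + R) * (↑u⁻¹ : PowerSeries K) = 1 := by
      rw [← hu, ← Units.val_mul, mul_inv_cancel, Units.val_one]
    rw [huv, mul_one]

end Aux

/-- With `e^{f̄(t)} = Σ p_n t^n/n!`, `p_1 = f̄'(0) ≠ 0`, and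
`(t/(e^{f̄(t)}-1))^α = Σ B_n^{(α)} t^n/n!` (for an integer order `α`, encoded
via the unit `u` with `↑u = Q = (e^{f̄(t)}-1)/t`), we have
`B_n^{(α)} = Σ_{k=0}^{n} (-α)_k p_1^{-α-k} B_{n,k}(p_2/2, …, p_{n-k+2}/(n-k+2))`,
where `(-α)_k` is the falling factorial and `B_{n,k}` the partial Bell
polynomial (encoded by its defining generating function). -/
theorem bernoulli_assoc_eq_sum_bell {K : Type*} [Field K] [CharZero K]
    (f fbar : PowerSeries K)
    (hf0 : PowerSeries.constantCoeff f = 0) (hf1 : PowerSeries.coeff 1 f ≠ 0)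
    (hinv : comp f fbar = PowerSeries.X ∧ comp fbar f = PowerSeries.X)
    (g : PowerSeries K) (hg : g = comp (PowerSeries.exp K) fbar - 1)
    (p : ℕ → K)
    (hp : ∀ n : ℕ, PowerSeries.coeff n (comp (PowerSeries.exp K) fbar)
      = p n / (n ! : K))
    (hp1 : p 1 ≠ 0)
    (α : ℤ) (Q : PowerSeries K) (hQ : PowerSeries.X * Q = g)
    (u : (PowerSeries K)ˣ) (hu : (u : PowerSeries K) = Q)
    (B : ℕ → K)
    (hB : ∀ m : ℕ, PowerSeries.coeff m ((u ^ (-α) : (PowerSeries K)ˣ) : PowerSeries K)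
      = B m / (m ! : K))
    (Bell : ℕ → ℕ → K)
    (hBell : ∀ k n : ℕ, (k ! : K)⁻¹ * PowerSeries.coeff n
        ((PowerSeries.mk fun m =>
          if m = 0 then 0 else (p (m + 1) / ((m : K) + 1)) / (m ! : K)) ^ k)
      = Bell n k / (n ! : K)) :
    ∀ n : ℕ, B n = ∑ k ∈ Finset.range (n + 1),
      (∏ i ∈ Finset.range k, ((-α : K) - (i : K))) * (p 1) ^ (-α - (k : ℤ)) *
        Bell n k := by
  intro n
  set R : PowerSeries K := PowerSeries.mk fun m =>
      if m = 0 then 0 else (p (m + 1) / ((m : K) + 1)) / (m ! : K) with hRdef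
  have hR0 : PowerSeries.constantCoeff R = 0 := by
    rw [← PowerSeries.coeff_zero_eq_constantCoeff, hRdef, PowerSeries.coeff_mk]
    simp
  have hQcoeff : ∀ m : ℕ, PowerSeries.coeff m Q = p (m + 1) / ((m + 1)! : K) := by
    intro m
    have h1 : PowerSeries.coeff (m + 1) (PowerSeries.X * Q) = PowerSeries.coeff m Q :=
      PowerSeries.coeff_succ_X_mul m Q
    rw [hQ, hg, map_sub, hp (m + 1), PowerSeries.coeff_one] at h1
    simp only [Nat.succ_ne_zero, if_false, sub_zero] at h1
    rw [← h1]
  have huCR : (u : PowerSeries K) = PowerSeries.C (p 1) + R := by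
    rw [hu]
    ext m
    rw [hQcoeff m, map_add, hRdef, PowerSeries.coeff_mk, PowerSeries.coeff_C]
    cases m with
    | zero => simp [Nat.factorial]
    | succ m =>
      simp only [Nat.succ_ne_zero, if_false, zero_add]
      have h1 : (((m + 1)! : ℕ) : K) ≠ 0 := Nat.cast_ne_zero.mpr (Nat.factorial_ne_zero _)
      have h2 : ((m : K) + 1 + 1) ≠ 0 := by
        have h := Nat.cast_ne_zero (R := K).mpr (Nat.succ_ne_zero (m + 1))
        push_cast at h
        exact h
      rw [Nat.factorial_succ (m + 1)]
      push_cast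
      field_simp
  have main : B n / (n ! : K)
      = ∑ k ∈ Finset.range (n + 1), cc (p 1) (-α) k * PowerSeries.coeff n (R ^ k) := by
    rw [← hB n, key_s10 (p 1) hp1 R hR0 u huCR (-α) n n le_rfl, coeff_GG]
  have hnfac : ((n ! : ℕ) : K) ≠ 0 := Nat.cast_ne_zero.mpr (Nat.factorial_ne_zero n)
  calc B n = (B n / (n ! : K)) * (n ! : K) := by field_simp
    _ = (∑ k ∈ Finset.range (n + 1),
          cc (p 1) (-α) k * PowerSeries.coeff n (R ^ k)) * (n ! : K) := by rw [main]
    _ = ∑ k ∈ Finset.range (n + 1),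
          cc (p 1) (-α) k * PowerSeries.coeff n (R ^ k) * (n ! : K) := Finset.sum_mul _ _ _
    _ = ∑ k ∈ Finset.range (n + 1),
          (∏ i ∈ Finset.range k, ((-α : K) - (i : K))) * (p 1) ^ (-α - (k : ℤ)) *
            Bell n k := by
      refine Finset.sum_congr rfl fun k _ => ?_
      have hkfac : ((k ! : ℕ) : K) ≠ 0 := Nat.cast_ne_zero.mpr (Nat.factorial_ne_zero k)
      have hc : PowerSeries.coeff n (R ^ k) = (k ! : K) * (Bell n k / (n ! : K)) := by
        rw [← hBell k n, ← mul_assoc, mul_inv_cancel₀ hkfac, one_mul]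
      rw [hc, cc]
      push_cast
      generalize (p 1) ^ (-α - (k : ℤ)) = z
      field_simp
end

section
/- For nonnegative integers n, k, j with j ≤ n-k, the binomial identity Σ_{i=j}^{n-k} C(n+i-1, i) C(i, j) = (n/(n+j)) C(2n-k, n) C(n-k, j) holds. -/
open Finset
open Nat

private lemma binom_step_identity (N d j : ℕ) :
    ((N:ℚ)+1) * (((N+1)+(j+d)).choose (N+1) : ℚ) * ((j+d).choose j : ℚ)
      + (((N:ℚ)+1)+j) * (((j+d+1)+N).choose (j+d+1) : ℚ) * ((j+(d+1)).choose j : ℚ)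
    = ((N:ℚ)+1) * (((N+1)+(j+d+1)).choose (N+1) : ℚ) * ((j+(d+1)).choose j : ℚ) := by
  rw [Nat.cast_add_choose, Nat.cast_add_choose, Nat.cast_add_choose, Nat.cast_add_choose,
    Nat.cast_add_choose]
  rw [show (j+d+1)+N = (N+1)+(j+d) by ring, show (N+1)+(j+d+1) = ((N+1)+(j+d))+1 by ring,
    show j+(d+1) = (j+d)+1 from rfl]
  have e1 : (((((N+1)+(j+d))+1))! : ℚ) = ((N:ℚ)+1+(j+d)+1) * (((N+1)+(j+d))! : ℚ) := by
    rw [Nat.factorial_succ]; push_cast; ring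
  have e2 : (((N+1))! : ℚ) = ((N:ℚ)+1) * (N ! : ℚ) := by
    rw [Nat.factorial_succ]; push_cast; ring
  have e3 : ((((j+d)+1))! : ℚ) = ((j:ℚ)+d+1) * ((j+d)! : ℚ) := by
    rw [Nat.factorial_succ]; push_cast; ring
  have e4 : (((d+1))! : ℚ) = ((d:ℚ)+1) * (d ! : ℚ) := by
    rw [Nat.factorial_succ]; push_cast; ring
  rw [show j+d+1 = (j+d)+1 from rfl] at *
  rw [e1, e2, e3, e4]
  have f0 : ((((N+1)+(j+d))! : ℚ)) ≠ 0 := by positivity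
  have f1 : (N ! : ℚ) ≠ 0 := by positivity
  have f2 : (j ! : ℚ) ≠ 0 := by positivity
  have f3 : (d ! : ℚ) ≠ 0 := by positivity
  have f5 : (((j+d)! : ℚ)) ≠ 0 := by positivity
  have g1 : ((j:ℚ)+d+1) ≠ 0 := by positivity
  have g2 : ((d:ℚ)+1) ≠ 0 := by positivity
  have g3 : ((N:ℚ)+1) ≠ 0 := by positivity
  field_simp
  ring

private lemma binom_base_identity (N j : ℕ) :
    ((N+j).choose j : ℚ) = ((N:ℚ)+1)/((N:ℚ)+1+j) * (((N+1)+j).choose (N+1) : ℚ) := by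
  have h1 : ((N+j).choose j : ℚ) = (N+j)! / (j ! * N !) := by
    rw [add_comm N j, Nat.cast_add_choose]
  have h2 : (((N+1)+j).choose (N+1) : ℚ) = ((N+1)+j)! / ((N+1)! * j !) := by
    rw [Nat.cast_add_choose]
  rw [h1, h2]
  have e1 : (((N+1)+j)! : ℚ) = ((N:ℚ)+1+j) * ((N+j)! : ℚ) := by
    rw [show (N+1)+j = (N+j)+1 by ring, Nat.factorial_succ]; push_cast; ring
  have e2 : ((N+1)! : ℚ) = ((N:ℚ)+1) * (N ! : ℚ) := by
    rw [Nat.factorial_succ]; push_cast; ring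
  rw [e1, e2]
  have f1 : (N ! : ℚ) ≠ 0 := by positivity
  have f2 : (j ! : ℚ) ≠ 0 := by positivity
  have f3 : ((N:ℚ)+1+j) ≠ 0 := by positivity
  field_simp

private lemma binom_sum_aux (N j d : ℕ) :
    (∑ i ∈ Finset.Icc j (j + d), (((N+1) + i - 1).choose i : ℚ) * (i.choose j : ℚ)) =
      ((N:ℚ)+1) / ((N:ℚ)+1+j) * (((N+1)+(j+d)).choose (N+1) : ℚ) * ((j+d).choose j : ℚ) := by
  induction d with
  | zero =>
      simp only [Nat.add_zero, Finset.Icc_self, Finset.sum_singleton, Nat.choose_self,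
        Nat.cast_one, mul_one]
      rw [show (N+1)+j-1 = N+j by omega]
      rw [binom_base_identity]
  | succ d IH =>
      rw [show j + (d+1) = (j+d) + 1 from rfl,
        Finset.sum_Icc_succ_top (by omega : j ≤ (j+d)+1), IH]
      rw [show (N+1) + ((j+d)+1) - 1 = (j+d+1)+N by omega]
      have hc : ((N:ℚ)+1+(j:ℚ)) ≠ 0 := by positivity
      have hstep := binom_step_identity N d j
      rw [show j+(d+1) = (j+d)+1 from rfl] at hstep
      rw [show (N+1)+((j+d)+1) = (N+1)+(j+d+1) from rfl]
      field_simp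
      linear_combination hstep

/-- `Σ_{i=j}^{n-k} C(n+i-1, i) C(i, j) = (n/(n+j)) C(2n-k, n) C(n-k, j)`. -/
theorem binom_sum_identity (n k j : ℕ) (hn : 1 ≤ n) (hk : k ≤ n) (hj : j ≤ n - k) :
    (∑ i ∈ Finset.Icc j (n - k), ((n + i - 1).choose i : ℚ) * (i.choose j : ℚ)) =
      (n : ℚ) / ((n : ℚ) + j) * ((2 * n - k).choose n : ℚ) * ((n - k).choose j : ℚ) := by
  obtain ⟨N, rfl⟩ : ∃ N, n = N + 1 := ⟨n - 1, by omega⟩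
  obtain ⟨d, hd⟩ : ∃ d, (N + 1) - k = j + d := ⟨(N + 1) - k - j, by omega⟩
  rw [hd, show 2 * (N+1) - k = (N+1) + (j+d) by omega]
  have := binom_sum_aux N j d
  push_cast at this ⊢
  convert this using 2
end
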